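/- arXiv:1604.00277 — 7 statements merged into one kernel-verified Lean document; each statement's English description precedes it below -/
import Mathlib

section
/- Let w1, w2 be elements of ℤ^n that can be extended to a ℤ-basis of ℤ^n, and let w~ = α·w1 + β·w2 with α, β ∈ ℤ. If the pair {-w1, w~} can also be extended to a ℤ-basis of ℤ^n, then β = 1 or β = -1. -/
namespace Module.Basis

variable {ι R M : Type*}

theorem repr_apply_eq_zero_of_apply_eq_neg [Ring R] [AddCommGroup M] [Module R M]
    (b : Basis ι R M) {i j : ι} (hij : i ≠ j) {x : M} (hx : b i = -x) :
    b.repr x j = 0 := by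
  rw [← neg_neg x, ← hx, map_neg, b.repr_self, Finsupp.neg_apply,
    Finsupp.single_eq_of_ne hij.symm, neg_zero]

theorem isUnit_of_apply_eq_smul_add [CommSemiring R] [AddCommMonoid M] [Module R M]
    (b : Basis ι R M) {j : ι} {x y : M} {a c : R} (hx : b.repr x j = 0)
    (hj : b j = a • x + c • y) : IsUnit c := by
  have hcoord : c * b.repr y j = 1 := by
    simpa [hx] using (congrArg (fun v => b.repr v j) hj).symm
  exact IsUnit.of_mul_eq_one _ hcoord

end Module.Basis

theorem stmt_0_general (n : ℕ) (w1 w2 : Fin n → ℤ) (α β : ℤ)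
    (b' : Module.Basis (Fin n) ℤ (Fin n → ℤ)) (i' j' : Fin n) (hij' : i' ≠ j')
    (hbi' : b' i' = -w1) (hbj' : b' j' = α • w1 + β • w2) :
    β = 1 ∨ β = -1 :=
  Int.isUnit_iff.mp <|
    b'.isUnit_of_apply_eq_smul_add (b'.repr_apply_eq_zero_of_apply_eq_neg hij' hbi') hbj'

/-- If `{w1, w2}` extends to a ℤ-basis of ℤⁿ and `{-w1, α•w1+β•w2}` also extends to a
ℤ-basis of ℤⁿ, then `β = ±1`. -/
theorem stmt_0 (n : ℕ) (w1 w2 : Fin n → ℤ) (α β : ℤ)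
    (b : Module.Basis (Fin n) ℤ (Fin n → ℤ)) (i j : Fin n) (hij : i ≠ j)
    (hbi : b i = w1) (hbj : b j = w2)
    (b' : Module.Basis (Fin n) ℤ (Fin n → ℤ)) (i' j' : Fin n) (hij' : i' ≠ j')
    (hbi' : b' i' = -w1) (hbj' : b' j' = α • w1 + β • w2) :
    β = 1 ∨ β = -1 :=
  stmt_0_general n w1 w2 α β b' i' j' hij' hbi' hbj'
end

section
/- Let n = 2m ≥ 2 be even and let h = (h_0, ..., h_n) be integers satisfying the symmetry h_j = h_{n-j} for all j. Define f_1 = Σ_{l=1}^{n} l · h_{n-l} and f_2 = Σ_{l=2}^{n} C(l,2) · h_{n-l}. Then 12·f_2 + (5-3n)·f_1 = 12·Σ_{k=1}^{m} k^2 · h_{m-k} - m · Σ_{k=0}^{n} h_k. -/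
/-!
Both sides are linear forms in `h`. Since `h` is symmetric about `m`, each side may be folded
about the midpoint: the terms at `j` and `2m - j` combine to a single multiple of `h j`. On the
left the coefficient of `h (2m - l)` is `12 C(l, 2) + (5 - 6m) l = 6l² - (6m + 1) l`, and the
sum of this quadratic at `l = j` and `l = 2m - j` is `12 (m - j)² - 2m`, which is exactly the
folded coefficient on the right; at the midpoint both coefficients are `-m`.
-/

open Finset

lemma two_mul_choose_two_eq (l : ℕ) : 2 * (l.choose 2 : ℤ) = l * (l - 1) := by
  have h : 2 * (l.choose 2 : ℚ) = l * (l - 1) := by rw [Nat.cast_choose_two]; ring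
  exact_mod_cast h

lemma sum_Icc_eq_sum_range_of_eq_zero {M : Type*} [AddCommMonoid M] {f : ℕ → M} {a : ℕ}
    (hf : ∀ l < a, f l = 0) (n : ℕ) : ∑ l ∈ Icc a n, f l = ∑ l ∈ range (n + 1), f l := by
  refine sum_subset (fun l hl => ?_) (fun l hl hla => hf l ?_)
  · simp only [mem_Icc, mem_range] at hl ⊢; omega
  · simp only [mem_Icc, mem_range, not_and_or] at hl hla; omega

lemma sum_Icc_one_eq_sum_range_reflect {M : Type*} [AddCommMonoid M] (f : ℕ → M) (m : ℕ) :
    ∑ k ∈ Icc 1 m, f k = ∑ j ∈ range m, f (m - j) := by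
  rw [← Nat.Ico_zero_eq_range, sum_Ico_reflect f 0 le_self_add, Nat.add_sub_cancel_left,
    Nat.sub_zero, Ico_add_one_right_eq_Icc]

lemma sum_range_two_mul_add_one_eq_fold {M : Type*} [AddCommMonoid M] (g : ℕ → M) (m : ℕ) :
    ∑ j ∈ range (2 * m + 1), g j = ∑ j ∈ range m, (g j + g (2 * m - j)) + g m := by
  have upper : ∑ j ∈ range m, g (m + 1 + j) = ∑ j ∈ range m, g (2 * m - j) := by
    rw [← sum_range_reflect]
    exact sum_congr rfl fun j hj => congrArg g (by simp only [mem_range] at hj; omega)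
  rw [show 2 * m + 1 = m + 1 + m by ring, sum_range_add, upper, sum_range_succ, sum_add_distrib]
  abel

lemma sum_mul_reflect_eq_fold_of_symm {R : Type*} [NonUnitalNonAssocSemiring R] (m : ℕ)
    (w h : ℕ → R) (hsym : ∀ j ≤ 2 * m, h j = h (2 * m - j)) :
    ∑ l ∈ range (2 * m + 1), w l * h (2 * m - l)
      = ∑ j ∈ range m, (w j + w (2 * m - j)) * h j + w m * h m := by
  rw [sum_range_two_mul_add_one_eq_fold]
  congr 1
  · refine sum_congr rfl fun j hj => ?_
    have hj : j ≤ 2 * m := by simp only [mem_range] at hj; omega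
    rw [Nat.sub_sub_self hj, ← hsym j hj, add_mul]
  · rw [show 2 * m - m = m by omega]

/-- The coefficient of `h (n - l)` in `12 f₂ + (5 - 3n) f₁` for `n = 2m`. -/
def edgeLengthCoeff (m l : ℕ) : ℤ := 12 * (l.choose 2 : ℤ) + (5 - 3 * (2 * m : ℤ)) * l

lemma edgeLengthCoeff_add_edgeLengthCoeff_reflect {m j : ℕ} (hj : j ≤ 2 * m) :
    edgeLengthCoeff m j + edgeLengthCoeff m (2 * m - j) = 12 * ((m : ℤ) - j) ^ 2 - 2 * m := by
  have hchoose := two_mul_choose_two_eq j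
  have hchoose_reflect := two_mul_choose_two_eq (2 * m - j)
  push_cast [edgeLengthCoeff, Nat.cast_sub hj] at hchoose_reflect ⊢
  linear_combination 6 * hchoose + 6 * hchoose_reflect

lemma edgeLengthCoeff_self (m : ℕ) : edgeLengthCoeff m m = -m := by
  rw [edgeLengthCoeff]
  linear_combination 6 * two_mul_choose_two_eq m

lemma sum_choose_two_add_sum_eq_sum_edgeLengthCoeff (m : ℕ) (x : ℕ → ℤ) :
    12 * (∑ l ∈ Icc 2 (2 * m), (l.choose 2 : ℤ) * x l)
      + (5 - 3 * (2 * m : ℤ)) * (∑ l ∈ Icc 1 (2 * m), (l : ℤ) * x l)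
      = ∑ l ∈ range (2 * m + 1), edgeLengthCoeff m l * x l := by
  have hchoose : ∀ l < 2, (l.choose 2 : ℤ) * x l = 0 := fun l hl => by
    simp [Nat.choose_eq_zero_of_lt hl]
  have hid : ∀ l : ℕ, l < 1 → (l : ℤ) * x l = 0 := fun l hl => by
    simp [Nat.lt_one_iff.mp hl]
  rw [sum_Icc_eq_sum_range_of_eq_zero hchoose, sum_Icc_eq_sum_range_of_eq_zero hid, mul_sum,
    mul_sum, ← sum_add_distrib]
  exact sum_congr rfl fun l _ => by rw [edgeLengthCoeff]; ring

lemma sum_edgeLengthCoeff_mul_reflect_of_symm {m : ℕ} {h : ℕ → ℤ}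
    (hsym : ∀ j ≤ 2 * m, h j = h (2 * m - j)) :
    ∑ l ∈ range (2 * m + 1), edgeLengthCoeff m l * h (2 * m - l)
      = ∑ j ∈ range m, (12 * ((m : ℤ) - j) ^ 2 - 2 * m) * h j - m * h m := by
  rw [sum_mul_reflect_eq_fold_of_symm m _ h hsym, edgeLengthCoeff_self, neg_mul, ← sub_eq_add_neg]
  congr 1
  refine sum_congr rfl fun j hj => ?_
  rw [edgeLengthCoeff_add_edgeLengthCoeff_reflect (by simp only [mem_range] at hj; omega)]

lemma sum_sq_mul_sub_mul_sum_of_symm {m : ℕ} {h : ℕ → ℤ}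
    (hsym : ∀ j ≤ 2 * m, h j = h (2 * m - j)) :
    12 * (∑ k ∈ Icc 1 m, (k : ℤ) ^ 2 * h (m - k)) - m * (∑ k ∈ range (2 * m + 1), h k)
      = ∑ j ∈ range m, (12 * ((m : ℤ) - j) ^ 2 - 2 * m) * h j - m * h m := by
  rw [sum_Icc_one_eq_sum_range_reflect, sum_range_two_mul_add_one_eq_fold, mul_add, ← sub_sub,
    mul_sum, mul_sum, ← sum_sub_distrib]
  congr 1
  refine sum_congr rfl fun j hj => ?_
  have hjm : j ≤ m := by simp only [mem_range] at hj; omega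
  rw [Nat.sub_sub_self hjm, ← hsym j (by omega), Nat.cast_sub hjm]
  ring

theorem stmt_2_general (m : ℕ) (h : ℕ → ℤ)
    (hsym : ∀ j ≤ 2 * m, h j = h (2 * m - j)) :
    12 * (∑ l ∈ Finset.Icc 2 (2 * m), (Nat.choose l 2 : ℤ) * h (2 * m - l))
      + (5 - 3 * (2 * m : ℤ)) * (∑ l ∈ Finset.Icc 1 (2 * m), (l : ℤ) * h (2 * m - l))
    = 12 * (∑ k ∈ Finset.Icc 1 m, (k : ℤ) ^ 2 * h (m - k))
      - (m : ℤ) * (∑ k ∈ Finset.range (2 * m + 1), h k) := by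
  rw [sum_choose_two_add_sum_eq_sum_edgeLengthCoeff, sum_edgeLengthCoeff_mul_reflect_of_symm hsym,
    sum_sq_mul_sub_mul_sum_of_symm hsym]

/-- Even-dimensional case: `12 f₂ + (5 - 3n) f₁ = C(n, h)` for a symmetric `h`-vector,
with `n = 2m`. -/
theorem stmt_2 (m : ℕ) (hm : 1 ≤ m) (h : ℕ → ℤ)
    (hsym : ∀ j ≤ 2 * m, h j = h (2 * m - j)) :
    12 * (∑ l ∈ Finset.Icc 2 (2 * m), (Nat.choose l 2 : ℤ) * h (2 * m - l))
      + (5 - 3 * (2 * m : ℤ)) * (∑ l ∈ Finset.Icc 1 (2 * m), (l : ℤ) * h (2 * m - l))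
    = 12 * (∑ k ∈ Finset.Icc 1 m, (k : ℤ) ^ 2 * h (m - k))
      - (m : ℤ) * (∑ k ∈ Finset.range (2 * m + 1), h k) :=
  stmt_2_general m h hsym
end

section
/- Let n = 2m+1 ≥ 3 be odd and let h = (h_0, ..., h_n) be integers satisfying h_j = h_{n-j} for all j. Define f_1 = Σ_{l=1}^{n} l · h_{n-l} and f_2 = Σ_{l=2}^{n} C(l,2) · h_{n-l}. Then 12·f_2 + (5-3n)·f_1 = 12·Σ_{k=1}^{m} k(k+1) · h_{m-k} - (m-1) · Σ_{k=0}^{n} h_k. -/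
/-!
Reindexing by `j = n - l` turns `12 f₂ + (5 - 3n) f₁` into `∑ c j * h j`. Symmetry of `h` lets one
replace `c j` by the average of `c j` and `c (n - j)`, which is `6 (j - m)(j - m - 1) - (m - 1)`.
That new coefficient is itself symmetric under `j ↦ n - j`, so its sum folds onto `j ≤ m`,
where `k = m - j` gives `k (k + 1)`.
-/

open Finset

section Reflection

variable {R : Type*} [Semiring R]

lemma sum_Icc_mul_sub_eq_sum_range (a h : ℕ → R) {k N : ℕ} (ha : ∀ l < k, a l = 0) :
    ∑ l ∈ Icc k N, a l * h (N - l) = ∑ j ∈ range (N + 1), a (N - j) * h j := by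
  have hzero : ∀ l ∈ range (N + 1), l ∉ Icc k N → a l * h (N - l) = 0 := fun l hl hlk => by
    simp only [mem_range, mem_Icc] at hl hlk
    rw [ha l (by omega), zero_mul]
  rw [sum_subset (fun l hl => by simp only [mem_Icc, mem_range] at hl ⊢; omega) hzero,
    ← sum_range_reflect (fun l => a l * h (N - l))]
  refine sum_congr rfl fun j hj => ?_
  rw [Nat.add_sub_cancel, Nat.sub_sub_self (Nat.lt_succ_iff.mp (mem_range.mp hj))]

lemma two_mul_sum_range_mul_eq_of_symm {N : ℕ} {h : ℕ → R}
    (hsym : ∀ j ≤ N, h j = h (N - j)) (c : ℕ → R) :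
    2 * ∑ j ∈ range (N + 1), c j * h j = ∑ j ∈ range (N + 1), (c j + c (N - j)) * h j := by
  have hrefl : ∑ j ∈ range (N + 1), c j * h j = ∑ j ∈ range (N + 1), c (N - j) * h j := by
    rw [← sum_range_reflect _ (N + 1)]
    refine sum_congr rfl fun j hj => ?_
    have hjN : j ≤ N := Nat.lt_succ_iff.mp (mem_range.mp hj)
    rw [Nat.add_sub_cancel, hsym j hjN]
  rw [two_mul]
  nth_rw 2 [hrefl]
  simp only [add_mul, sum_add_distrib]

end Reflection

lemma sum_range_two_mul_add_two_of_palindrome {M : Type*} [AddCommMonoid M] (f : ℕ → M) (m : ℕ)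
    (hf : ∀ j ≤ 2 * m + 1, f (2 * m + 1 - j) = f j) :
    ∑ j ∈ range (2 * m + 2), f j = 2 • ∑ j ∈ range (m + 1), f j := by
  rw [show 2 * m + 2 = (m + 1) + (m + 1) by ring, sum_range_add, two_nsmul]
  congr 1
  rw [← sum_range_reflect f (m + 1)]
  refine sum_congr rfl fun j hj => ?_
  have hjm := mem_range.mp hj
  rw [← hf _ (by omega)]
  congr 1; omega

lemma two_mul_cast_choose_two {R : Type*} [CommRing R] (l : ℕ) :
    2 * (l.choose 2 : R) = l * (l - 1) := by
  rw [← Nat.cast_descFactorial_two, Nat.descFactorial_eq_factorial_mul_choose, Nat.factorial_two]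
  push_cast; ring

lemma face_coeff_add_reflect {m j : ℕ} (hj : j ≤ 2 * m + 1) :
    (12 * ((2 * m + 1 - j).choose 2 : ℤ) + (5 - 3 * (2 * m + 1 : ℤ)) * ((2 * m + 1 - j : ℕ) : ℤ))
      + (12 * (j.choose 2 : ℤ) + (5 - 3 * (2 * m + 1 : ℤ)) * j)
      = 12 * ((j : ℤ) - m) * ((j : ℤ) - m - 1) - 2 * ((m : ℤ) - 1) := by
  have hrefl := two_mul_cast_choose_two (R := ℤ) (2 * m + 1 - j)
  have hj2 := two_mul_cast_choose_two (R := ℤ) j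
  rw [Nat.cast_sub hj] at hrefl ⊢
  push_cast at hrefl ⊢
  linear_combination 6 * hrefl + 6 * hj2

lemma sum_face_coeff_mul_of_symm (m : ℕ) (h : ℕ → ℤ)
    (hsym : ∀ j ≤ 2 * m + 1, h j = h (2 * m + 1 - j)) :
    12 * ∑ j ∈ range (2 * m + 2), ((2 * m + 1 - j).choose 2 : ℤ) * h j
      + (5 - 3 * (2 * m + 1 : ℤ)) * ∑ j ∈ range (2 * m + 2), ((2 * m + 1 - j : ℕ) : ℤ) * h j
      = 6 * ∑ j ∈ range (2 * m + 2), ((j : ℤ) - m) * ((j : ℤ) - m - 1) * h j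
        - ((m : ℤ) - 1) * ∑ j ∈ range (2 * m + 2), h j := by
  set c : ℕ → ℤ := fun j =>
    12 * ((2 * m + 1 - j).choose 2 : ℤ) + (5 - 3 * (2 * m + 1 : ℤ)) * ((2 * m + 1 - j : ℕ) : ℤ)
  have hsymm := two_mul_sum_range_mul_eq_of_symm hsym c
  have hc : 12 * ∑ j ∈ range (2 * m + 2), ((2 * m + 1 - j).choose 2 : ℤ) * h j
      + (5 - 3 * (2 * m + 1 : ℤ)) * ∑ j ∈ range (2 * m + 2), ((2 * m + 1 - j : ℕ) : ℤ) * h j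
      = ∑ j ∈ range (2 * m + 2), c j * h j := by
    rw [mul_sum, mul_sum, ← sum_add_distrib]
    exact sum_congr rfl fun j _ => by ring
  have hpair : ∑ j ∈ range (2 * m + 2), (c j + c (2 * m + 1 - j)) * h j
      = ∑ j ∈ range (2 * m + 2),
          (12 * ((j : ℤ) - m) * ((j : ℤ) - m - 1) - 2 * ((m : ℤ) - 1)) * h j :=
    sum_congr rfl fun j hj => by
      have hj' : j ≤ 2 * m + 1 := Nat.lt_succ_iff.mp (mem_range.mp hj)
      simp only [c]
      rw [Nat.sub_sub_self hj', face_coeff_add_reflect hj']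
  have hsplit : ∑ j ∈ range (2 * m + 2),
      (12 * ((j : ℤ) - m) * ((j : ℤ) - m - 1) - 2 * ((m : ℤ) - 1)) * h j
      = 12 * ∑ j ∈ range (2 * m + 2), ((j : ℤ) - m) * ((j : ℤ) - m - 1) * h j
        - 2 * ((m : ℤ) - 1) * ∑ j ∈ range (2 * m + 2), h j := by
    rw [mul_sum, mul_sum, ← sum_sub_distrib]
    exact sum_congr rfl fun j _ => by ring
  rw [hc]
  linarith [hsymm.trans (hpair.trans hsplit)]

lemma sum_sub_mul_sub_sub_one_mul_of_symm (m : ℕ) (h : ℕ → ℤ)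
    (hsym : ∀ j ≤ 2 * m + 1, h j = h (2 * m + 1 - j)) :
    ∑ j ∈ range (2 * m + 2), ((j : ℤ) - m) * ((j : ℤ) - m - 1) * h j
      = 2 * ∑ k ∈ Icc 1 m, (k : ℤ) * (k + 1) * h (m - k) := by
  have hpal : ∀ j ≤ 2 * m + 1, ((↑(2 * m + 1 - j) : ℤ) - m) * ((↑(2 * m + 1 - j) : ℤ) - m - 1)
      * h (2 * m + 1 - j) = ((j : ℤ) - m) * ((j : ℤ) - m - 1) * h j := fun j hj => by
    rw [hsym j hj, Nat.cast_sub hj]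
    push_cast
    ring
  rw [sum_range_two_mul_add_two_of_palindrome _ m hpal, nsmul_eq_mul, Nat.cast_two,
    sum_Icc_mul_sub_eq_sum_range (fun k : ℕ => (k : ℤ) * (k + 1)) h (k := 1)
      (fun l hl => by simp [Nat.lt_one_iff.mp hl])]
  refine congrArg (2 * ·) (sum_congr rfl fun j hj => ?_)
  rw [Nat.cast_sub (Nat.lt_succ_iff.mp (mem_range.mp hj))]
  ring

theorem stmt_3_general (m : ℕ) (h : ℕ → ℤ)
    (hsym : ∀ j ≤ 2 * m + 1, h j = h (2 * m + 1 - j)) :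
    12 * (∑ l ∈ Finset.Icc 2 (2 * m + 1), (Nat.choose l 2 : ℤ) * h (2 * m + 1 - l))
      + (5 - 3 * (2 * m + 1 : ℤ)) * (∑ l ∈ Finset.Icc 1 (2 * m + 1), (l : ℤ) * h (2 * m + 1 - l))
    = 12 * (∑ k ∈ Finset.Icc 1 m, (k : ℤ) * (k + 1) * h (m - k))
      - ((m : ℤ) - 1) * (∑ k ∈ Finset.range (2 * m + 2), h k) := by
  rw [sum_Icc_mul_sub_eq_sum_range (fun l => (l.choose 2 : ℤ)) h
      (fun l hl => by simp [Nat.choose_eq_zero_of_lt hl]),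
    sum_Icc_mul_sub_eq_sum_range (fun l => (l : ℤ)) h (fun l hl => by simp [Nat.lt_one_iff.mp hl])]
  linarith [sum_face_coeff_mul_of_symm m h hsym, sum_sub_mul_sub_sub_one_mul_of_symm m h hsym]

/-- Odd-dimensional case: `12 f₂ + (5 - 3n) f₁ = C(n, h)` for a symmetric `h`-vector,
with `n = 2m + 1`. -/
theorem stmt_3 (m : ℕ) (hm : 1 ≤ m) (h : ℕ → ℤ)
    (hsym : ∀ j ≤ 2 * m + 1, h j = h (2 * m + 1 - j)) :
    12 * (∑ l ∈ Finset.Icc 2 (2 * m + 1), (Nat.choose l 2 : ℤ) * h (2 * m + 1 - l))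
      + (5 - 3 * (2 * m + 1 : ℤ)) * (∑ l ∈ Finset.Icc 1 (2 * m + 1), (l : ℤ) * h (2 * m + 1 - l))
    = 12 * (∑ k ∈ Finset.Icc 1 m, (k : ℤ) * (k + 1) * h (m - k))
      - ((m : ℤ) - 1) * (∑ k ∈ Finset.range (2 * m + 2), h k) :=
  stmt_3_general m h hsym
end

section
/- Let N ≥ 1, λ ∈ {1, ..., N}, and let A_0, A_1, ..., A_N and b_1, ..., b_N be integers such that: b_1 ≤ b_2 ≤ ... ≤ b_N and b_1 ≥ 1; A_i ≥ 0 for 1 ≤ i < λ; A_i ≤ 0 for λ ≤ i ≤ N; S := Σ_{i=1}^{N} A_i < 0; and 0 ≤ A_0 + Σ_{i=1}^{N} A_i·b_i. Then (-S)·b_λ ≤ A_0. -/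
theorem Finset.sum_mul_le_sum_mul_of_sign_change {ι R : Type*} [LinearOrder ι] [Ring R]
    [PartialOrder R] [IsOrderedRing R] (s : Finset ι) (A b : ι → R) (l : ι)
    (hb_lt : ∀ i ∈ s, i < l → b i ≤ b l) (hb_ge : ∀ i ∈ s, l ≤ i → b l ≤ b i)
    (hA_lt : ∀ i ∈ s, i < l → 0 ≤ A i) (hA_ge : ∀ i ∈ s, l ≤ i → A i ≤ 0) :
    ∑ i ∈ s, A i * b i ≤ (∑ i ∈ s, A i) * b l := by
  rw [Finset.sum_mul]
  refine Finset.sum_le_sum fun i hi => ?_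
  rcases lt_or_ge i l with h | h
  · exact mul_le_mul_of_nonneg_left (hb_lt i hi h) (hA_lt i hi h)
  · exact mul_le_mul_of_nonpos_left (hb_ge i hi h) (hA_ge i hi h)

theorem stmt_11_general (N : ℕ) (lam : ℕ) (hlam : 1 ≤ lam ∧ lam ≤ N)
    (A b : ℕ → ℤ)
    (hmono : ∀ i j, 1 ≤ i → i ≤ j → j ≤ N → b i ≤ b j)
    (hApos : ∀ i, 1 ≤ i → i < lam → 0 ≤ A i)
    (hAneg : ∀ i, lam ≤ i → i ≤ N → A i ≤ 0)
    (hnn : 0 ≤ A 0 + ∑ i ∈ Finset.Icc 1 N, A i * b i) :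
    (-(∑ i ∈ Finset.Icc 1 N, A i)) * b lam ≤ A 0 := by
  have hcompare := Finset.sum_mul_le_sum_mul_of_sign_change (Finset.Icc 1 N) A b lam
    (fun i hi h => hmono i lam (Finset.mem_Icc.1 hi).1 h.le hlam.2)
    (fun i hi h => hmono lam i hlam.1 h (Finset.mem_Icc.1 hi).2)
    (fun i hi h => hApos i (Finset.mem_Icc.1 hi).1 h)
    (fun i hi h => hAneg i h (Finset.mem_Icc.1 hi).2)
  linarith

/-- Abstract inequality bounding `b λ`: if the coefficients `A i` change sign from
nonnegative to nonpositive at index `λ`, `b` is nondecreasing and positive, the total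
sum `S` of the `A i` (for `i ≥ 1`) is negative, and `A 0 + Σ A i b i ≥ 0`, then
`(-S) · b λ ≤ A 0`. -/
theorem stmt_11 (N : ℕ) (hN : 1 ≤ N) (lam : ℕ) (hlam : 1 ≤ lam ∧ lam ≤ N)
    (A b : ℕ → ℤ)
    (hmono : ∀ i j, 1 ≤ i → i ≤ j → j ≤ N → b i ≤ b j) (hb1 : 1 ≤ b 1)
    (hApos : ∀ i, 1 ≤ i → i < lam → 0 ≤ A i)
    (hAneg : ∀ i, lam ≤ i → i ≤ N → A i ≤ 0)
    (hS : ∑ i ∈ Finset.Icc 1 N, A i < 0)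
    (hnn : 0 ≤ A 0 + ∑ i ∈ Finset.Icc 1 N, A i * b i) :
    (-(∑ i ∈ Finset.Icc 1 N, A i)) * b lam ≤ A 0 :=
  stmt_11_general N lam hlam A b hmono hApos hAneg hnn
end

section
/- Let u, v ∈ ℝ^n, let w ∈ ℤ^n be primitive with v - u = l·w for some real l, and suppose there are vectors w_1, ..., w_n and w~_1, ..., w~_n in ℤ^n with w_1 = w, w~_1 = -w, Σ_{j=1}^{n} w_j = -u, Σ_{j=1}^{n} w~_j = -v, and a bijection σ of {2, ..., n} together with integers a_2, ..., a_n such that w_i - w~_{σ(i)} = a_i·w for each i = 2, ..., n. Then l = 2 + Σ_{i=2}^{n} a_i. -/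
/-!
Pair each weight at `u` with a weight at `v`: the edge weights contribute `w - (-w) = 2 • w`
and the others `aᵢ • w`, so `-u - (-v) = (2 + Σ aᵢ) • w`. Comparing with `v - u = l • w`
gives the claim, as a primitive vector is nonzero.
-/

theorem ne_zero_of_forall_eq_smul {M : Type*} [AddCommGroup M] {w : M}
    (hprim : ∀ (m : ℤ) (w' : M), w = m • w' → m = 1 ∨ m = -1) : w ≠ 0 := by
  rintro rfl
  simpa using hprim 0 0 (zero_smul ℤ 0).symm

theorem sum_sub_sum_eq_smul_of_pairing {ι M : Type*} [Fintype ι] [DecidableEq ι]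
    [AddCommGroup M] {W T : ι → M} {w : M} {i₀ : ι} (hW : W i₀ = w) (hT : T i₀ = -w)
    (σ : Equiv.Perm ι) (hσ : σ i₀ = i₀) (a : ι → ℤ)
    (ha : ∀ i, i ≠ i₀ → W i - T (σ i) = a i • w) :
    ∑ j, W j - ∑ j, T j = (2 + ∑ i ∈ Finset.univ.filter (· ≠ i₀), a i) • w := by
  rw [← Equiv.sum_comp σ T, ← Finset.sum_sub_distrib,
    ← Finset.add_sum_erase _ _ (Finset.mem_univ i₀), Finset.filter_ne',
    Finset.sum_congr rfl fun i hi => ha i (Finset.ne_of_mem_erase hi),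
    hW, hσ, hT, add_smul, Finset.sum_smul, sub_neg_eq_add, two_smul]

/-- The lattice-algebra core of the relative-length computation: with the reflexivity
conditions `Σ wⱼ = -u`, `Σ w̃ⱼ = -v`, weight `w` along the edge reversing sign, and the
remaining weights paired via `wᵢ - w̃_{σ(i)} = aᵢ • w`, one gets `l = 2 + Σ aᵢ`. -/
theorem stmt_15 (n : ℕ) [NeZero n] (u v : Fin n → ℝ) (w : Fin n → ℤ)
    (hprim : ∀ (m : ℤ) (w' : Fin n → ℤ), w = m • w' → m = 1 ∨ m = -1)
    (l : ℝ) (hl : v - u = l • fun j => (w j : ℝ))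
    (W T : Fin n → Fin n → ℤ)
    (hW0 : W 0 = w) (hT0 : T 0 = -w)
    (hsumW : ∀ i, ((∑ j, W j i : ℤ) : ℝ) = -u i)
    (hsumT : ∀ i, ((∑ j, T j i : ℤ) : ℝ) = -v i)
    (σ : Equiv.Perm (Fin n)) (hσ0 : σ 0 = 0)
    (a : Fin n → ℤ)
    (ha : ∀ i : Fin n, i ≠ 0 → W i - T (σ i) = a i • w) :
    l = 2 + ((∑ i ∈ Finset.univ.filter (fun i : Fin n => i ≠ 0), a i : ℤ) : ℝ) := by
  set c : ℤ := 2 + ∑ i ∈ Finset.univ.filter (fun i : Fin n => i ≠ 0), a i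
  have hpair := sum_sub_sum_eq_smul_of_pairing hW0 hT0 σ hσ0 a ha
  have hw : (fun j => (w j : ℝ)) ≠ 0 := fun h =>
    ne_zero_of_forall_eq_smul hprim (funext fun j => by simpa using congrFun h j)
  have hlc : l • (fun j => (w j : ℝ)) = (c : ℝ) • fun j => (w j : ℝ) := by
    rw [← hl]
    funext i
    have hi := congrArg (fun x : ℤ => (x : ℝ)) (congrFun hpair i)
    simp only [Pi.sub_apply, Finset.sum_apply, Pi.smul_apply, smul_eq_mul, Int.cast_sub,
      Int.cast_mul, hsumW, hsumT] at hi
    simp only [Pi.sub_apply, Pi.smul_apply, smul_eq_mul]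
    linarith
  exact_mod_cast smul_left_injective ℝ hw hlc
end

section
/- Let Φ be a crystallographic root system with positive roots Φ⁺ and simple roots Δ, let I ⊆ Δ, ⟨I⟩ the positive roots in the span of I, and W_I the parabolic subgroup generated by {s_α : α ∈ I}. If w ∈ W satisfies w(Φ⁺ \ ⟨I⟩) = Φ⁺ \ ⟨I⟩ (as a set), then w ∈ W_I. -/
/-!
Write `w` as a word in simple reflections and induct on its length. Let `a` be the last letter.
If `w a > 0`, the word without `a` sends `a` to a negative root, and the deletion step (the
exchange condition) shortens the whole word without changing `w`. If `w a < 0`, then `a ∈ I`,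
since `w` keeps `Φ⁺ \ ⟨I⟩` positive; as `s_a` permutes `Φ⁺ \ ⟨I⟩`, so does `w s_a`, which is a
shorter word, and `w = (w s_a) s_a ∈ W_I`.
-/

open Submodule Set

section

variable {E : Type*} [NormedAddCommGroup E] [InnerProductSpace ℝ E]

noncomputable def rootReflection (α : E) : E ≃ₗᵢ[ℝ] E := (ℝ ∙ α)ᗮ.reflection

theorem rootReflection_apply (α x : E) :
    rootReflection α x = x - (2 * inner ℝ x α / inner ℝ α α) • α := by
  rw [rootReflection, reflection_orthogonal_apply, reflection_singleton_apply,
    real_inner_self_eq_norm_sq, real_inner_comm]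
  simp only [RCLike.ofReal_real_eq_id, id]
  rw [neg_sub, two_smul ℕ, ← two_smul ℝ, smul_smul, mul_div_assoc]

theorem rootReflection_self (α : E) : rootReflection α α = -α :=
  reflection_orthogonalComplement_singleton_eq_neg α

@[simp]
theorem rootReflection_inv (α : E) : (rootReflection α)⁻¹ = rootReflection α :=
  reflection_inv

@[simp]
theorem rootReflection_rootReflection (α x : E) : rootReflection α (rootReflection α x) = x :=
  reflection_reflection _ x

theorem rootReflection_mul_self (α : E) : rootReflection α * rootReflection α = 1 :=
  reflection_mul_reflection _

theorem rootReflection_smul {c : ℝ} (hc : c ≠ 0) (α : E) :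
    rootReflection (c • α) = rootReflection α := by
  simp only [rootReflection, span_singleton_smul_eq hc.isUnit]

theorem rootReflection_map (g : E ≃ₗᵢ[ℝ] E) (β : E) :
    rootReflection (g β) = g * rootReflection β * g⁻¹ := by
  ext x
  have hx : inner ℝ (g.symm x) β = inner ℝ x (g β) := by
    rw [← g.inner_map_map, g.apply_symm_apply]
  simp [LinearIsometryEquiv.coe_mul, LinearIsometryEquiv.coe_inv, rootReflection_apply, hx]

theorem rootReflection_mem_iff {K : Submodule ℝ E} {α : E} (hα : α ∈ K) (x : E) :
    rootReflection α x ∈ K ↔ x ∈ K := by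
  rw [rootReflection_apply]
  exact sub_mem_iff_left K (smul_mem K _ hα)

noncomputable def rootWord (l : List E) : E ≃ₗᵢ[ℝ] E := (l.map rootReflection).prod

@[simp]
theorem rootWord_nil : rootWord ([] : List E) = 1 := rfl

@[simp]
theorem rootWord_cons (a : E) (l : List E) : rootWord (a :: l) = rootReflection a * rootWord l :=
  List.prod_cons

@[simp]
theorem rootWord_append (l l' : List E) : rootWord (l ++ l') = rootWord l * rootWord l' := by
  simp [rootWord]

theorem rootWord_inv (l : List E) : (rootWord l)⁻¹ = rootWord l.reverse := by
  simp [rootWord, List.prod_inv_reverse, Function.comp_def, rootReflection_inv, List.map_reverse]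

theorem exists_rootWord_eq_of_mem_closure {A : Set E} {g : E ≃ₗᵢ[ℝ] E}
    (hg : g ∈ Subgroup.closure (rootReflection '' A)) :
    ∃ l : List E, (∀ a ∈ l, a ∈ A) ∧ rootWord l = g := by
  induction hg using Subgroup.closure_induction with
  | mem _ hg =>
    obtain ⟨α, hα, rfl⟩ := hg
    exact ⟨[α], by simpa using hα, by simp⟩
  | one => exact ⟨[], by simp, rfl⟩
  | mul _ _ _ _ ih ih' =>
    obtain ⟨l, hl, rfl⟩ := ih
    obtain ⟨l', hl', rfl⟩ := ih'
    exact ⟨l ++ l', fun a ha => (List.mem_append.1 ha).elim (hl a) (hl' a), rootWord_append l l'⟩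
  | inv _ _ ih =>
    obtain ⟨l, hl, rfl⟩ := ih
    exact ⟨l.reverse, by simpa using hl, (rootWord_inv l).symm⟩

theorem mem_span_singleton_of_add_mem {Δ : Finset E} (hΔ : LinearIndepOn ℝ id (Δ : Set E))
    {α : E} (hα : α ∈ Δ) (f g : E → ℕ)
    (h : ∑ δ ∈ Δ, (f δ : ℝ) • δ + ∑ δ ∈ Δ, (g δ : ℝ) • δ ∈ ℝ ∙ α) :
    ∑ δ ∈ Δ, (f δ : ℝ) • δ ∈ ℝ ∙ α := by
  classical
  obtain ⟨k, hk⟩ := mem_span_singleton.1 h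
  have hcoeff := linearIndepOn_iff'.1 hΔ Δ (fun δ => f δ + g δ - if δ = α then k else 0)
    subset_rfl (by simp [sub_smul, add_smul, Finset.sum_add_distrib, hα, hk])
  rw [Finset.sum_eq_single_of_mem α hα fun δ hδ hδα => ?_]
  · exact smul_mem _ _ (mem_span_singleton_self α)
  · have := hcoeff δ hδ
    simp only [hδα, if_false, sub_zero] at this
    norm_cast at this
    simp [Nat.eq_zero_of_add_eq_zero_right this]

structure IsSimpleSystem (Φ Φp Δ : Finset E) : Prop where
  zero_notMem : (0 : E) ∉ Φ
  rootReflection_mem : ∀ α ∈ Φ, ∀ β ∈ Φ, rootReflection α β ∈ Φ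
  pos_subset : Φp ⊆ Φ
  pos_or_neg : ∀ α ∈ Φ, (α ∈ Φp ∧ -α ∉ Φp) ∨ (α ∉ Φp ∧ -α ∈ Φp)
  simple_subset : Δ ⊆ Φp
  linearIndepOn : LinearIndepOn ℝ id (Δ : Set E)
  exists_nat_coeffs : ∀ β ∈ Φp, ∃ c : E → ℕ, β = ∑ α ∈ Δ, (c α : ℝ) • α

namespace IsSimpleSystem

variable {Φ Φp Δ : Finset E}

theorem neg_notMem_pos (h : IsSimpleSystem Φ Φp Δ) {β : E} (hβ : β ∈ Φp) : -β ∉ Φp := by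
  have := h.pos_or_neg β (h.pos_subset hβ)
  tauto

theorem neg_mem_pos (h : IsSimpleSystem Φ Φp Δ) {β : E} (hβ : β ∈ Φ) (hβ' : β ∉ Φp) :
    -β ∈ Φp := by
  have := h.pos_or_neg β hβ
  tauto

theorem mem_of_mem_span {I : Finset E} (h : IsSimpleSystem Φ Φp Δ) (hI : I ⊆ Δ) {β : E}
    (hβ : β ∈ Δ) (hβI : β ∈ span ℝ (I : Set E)) : β ∈ I := by
  have hΔ := h.linearIndepOn
  refine ((hΔ.mono (Finset.coe_subset.2 hI)).mem_span_iff_id.1 hβI) (hΔ.mono ?_)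
  exact insert_subset hβ (Finset.coe_subset.2 hI)

theorem rootReflection_mem_pos (h : IsSimpleSystem Φ Φp Δ) {α γ : E} (hα : α ∈ Δ)
    (hγ : γ ∈ Φp) (hγα : γ ∉ ℝ ∙ α) : rootReflection α γ ∈ Φp := by
  by_contra hneg
  have hmem := h.rootReflection_mem α (h.pos_subset (h.simple_subset hα)) γ (h.pos_subset hγ)
  obtain ⟨f, hf⟩ := h.exists_nat_coeffs γ hγ
  obtain ⟨g, hg⟩ := h.exists_nat_coeffs _ (h.neg_mem_pos hmem hneg)
  refine hγα (hf ▸ mem_span_singleton_of_add_mem h.linearIndepOn hα f g ?_)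
  rw [← hf, ← hg, rootReflection_apply, neg_sub, add_sub_cancel]
  exact smul_mem _ _ (mem_span_singleton_self α)

theorem mapsTo_rootReflection {I : Finset E} (h : IsSimpleSystem Φ Φp Δ) (hI : I ⊆ Δ) {α : E}
    (hα : α ∈ I) :
    MapsTo (rootReflection α) {β | β ∈ Φp ∧ β ∉ span ℝ (I : Set E)}
      {β | β ∈ Φp ∧ β ∉ span ℝ (I : Set E)} := by
  have hαI : α ∈ span ℝ (I : Set E) := subset_span hα
  rintro γ ⟨hγ, hγI⟩
  refine ⟨h.rootReflection_mem_pos (hI hα) hγ fun hγα => hγI ?_, ?_⟩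
  · exact span_le.2 (singleton_subset_iff.2 hαI) hγα
  · exact (rootReflection_mem_iff hαI γ).not.2 hγI

theorem exists_rootWord_eq_mul_rootReflection (h : IsSimpleSystem Φ Φp Δ) {β : E}
    (hβ : β ∈ Δ) (l : List E) (hl : ∀ a ∈ l, a ∈ Δ) (hneg : rootWord l β ∉ Φp) :
    ∃ l' : List E, (∀ a ∈ l', a ∈ Δ) ∧ l'.length < l.length ∧
      rootWord l' = rootWord l * rootReflection β := by
  induction l with
  | nil => exact absurd (h.simple_subset hβ) (by simpa using hneg)
  | cons a t ih =>
    simp only [List.mem_cons, forall_eq_or_imp] at hl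
    rw [rootWord_cons, LinearIsometryEquiv.coe_mul, Function.comp_apply] at hneg
    by_cases ht : rootWord t β ∈ Φp
    · -- `s_a` sends the positive root `t β` to a negative one, so `t β` is a multiple of `a`,
      -- and conjugating `s_β` by `t` gives `s_{t β} = s_a`
      obtain ⟨c, hc⟩ := mem_span_singleton.1 <|
        not_not.1 fun hta => hneg (h.rootReflection_mem_pos hl.1 ht hta)
      have hc0 : c ≠ 0 := by
        rintro rfl
        exact h.zero_notMem (h.pos_subset (by simpa [← hc] using ht))
      have hconj : rootWord t * rootReflection β = rootReflection a * rootWord t := by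
        rw [← rootReflection_smul hc0 a, hc, rootReflection_map, inv_mul_cancel_right]
      refine ⟨t, hl.2, by simp, ?_⟩
      rw [rootWord_cons, mul_assoc, hconj, ← mul_assoc, rootReflection_mul_self, one_mul]
    · obtain ⟨t', ht', hlen, hprod⟩ := ih hl.2 ht
      refine ⟨a :: t', by simpa using ⟨hl.1, ht'⟩, by simpa using hlen, ?_⟩
      rw [rootWord_cons, hprod, rootWord_cons, mul_assoc]

theorem rootWord_mem_closure_of_mapsTo {I : Finset E} (h : IsSimpleSystem Φ Φp Δ) (hI : I ⊆ Δ)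
    (l : List E) (hl : ∀ a ∈ l, a ∈ Δ)
    (hS : MapsTo (rootWord l) {β | β ∈ Φp ∧ β ∉ span ℝ (I : Set E)}
      {β | β ∈ Φp ∧ β ∉ span ℝ (I : Set E)}) :
    rootWord l ∈ Subgroup.closure (rootReflection '' I) := by
  rcases l.eq_nil_or_concat' with rfl | ⟨t, a, rfl⟩
  · exact Subgroup.one_mem _
  simp only [List.mem_append, List.mem_singleton] at hl
  have ha : a ∈ Δ := hl a (Or.inr rfl)
  have ht : ∀ b ∈ t, b ∈ Δ := fun b hb => hl b (Or.inl hb)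
  have hword : rootWord (t ++ [a]) = rootWord t * rootReflection a := by simp
  rw [hword] at hS ⊢
  by_cases hpos : (rootWord t * rootReflection a) a ∈ Φp
  · have hneg : rootWord t a ∉ Φp := by
      simpa [rootReflection_self] using h.neg_notMem_pos hpos
    obtain ⟨l', hl', hlen, hprod⟩ := h.exists_rootWord_eq_mul_rootReflection ha t ht hneg
    rw [← hprod] at hS ⊢
    exact h.rootWord_mem_closure_of_mapsTo hI l' hl' hS
  · have haI : a ∈ I := h.mem_of_mem_span hI ha <|
      by_contra fun haI => hpos (hS ⟨h.simple_subset ha, haI⟩).1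
    have htS : MapsTo (rootWord t) {β | β ∈ Φp ∧ β ∉ span ℝ (I : Set E)}
        {β | β ∈ Φp ∧ β ∉ span ℝ (I : Set E)} := fun γ hγ => by
      simpa using hS (h.mapsTo_rootReflection hI haI hγ)
    exact Subgroup.mul_mem _ (h.rootWord_mem_closure_of_mapsTo hI t ht htS)
      (Subgroup.subset_closure (mem_image_of_mem _ haI))
termination_by l.length
decreasing_by all_goals subst_vars; simp only [List.length_append, List.length_singleton]; omega

end IsSimpleSystem

def isometryToPerm : (E ≃ₗᵢ[ℝ] E) →* Equiv.Perm E where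
  toFun g := g.toLinearEquiv.toEquiv
  map_one' := rfl
  map_mul' _ _ := rfl

@[simp]
theorem isometryToPerm_apply (g : E ≃ₗᵢ[ℝ] E) (x : E) : isometryToPerm g x = g x := rfl

theorem closure_reflections_eq_map (A : Finset E) :
    Subgroup.closure {σ : Equiv.Perm E | ∃ α ∈ A,
        ∀ x : E, σ x = x - (2 * (inner ℝ x α : ℝ) / (inner ℝ α α : ℝ)) • α} =
      (Subgroup.closure (rootReflection '' A)).map isometryToPerm := by
  rw [MonoidHom.map_closure, ← image_comp]
  congr 1
  ext σ
  simp only [mem_ofPred_eq, mem_image, Finset.mem_coe, Function.comp_apply, Equiv.ext_iff,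
    isometryToPerm_apply, rootReflection_apply]
  exact exists_congr fun α => and_congr_right' (forall_congr' fun x => eq_comm)

end

theorem stmt_17_general (E : Type*) [NormedAddCommGroup E] [InnerProductSpace ℝ E]
    (Φ : Finset E) (hΦ0 : (0 : E) ∉ Φ)
    (hrefl : ∀ α ∈ Φ, ∀ β ∈ Φ, β - (2 * (inner ℝ β α : ℝ) / (inner ℝ α α : ℝ)) • α ∈ Φ)
    (Φp : Finset E) (hΦpΦ : Φp ⊆ Φ)
    (hpos : ∀ α ∈ Φ, (α ∈ Φp ∧ -α ∉ Φp) ∨ (α ∉ Φp ∧ -α ∈ Φp))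
    (Δ : Finset E) (hΔ : Δ ⊆ Φp)
    (hind : LinearIndependent ℝ (fun α : Δ => (α : E)))
    (hsimple : ∀ β ∈ Φp, ∃ c : E → ℕ, β = ∑ α ∈ Δ, (c α : ℝ) • α)
    (I : Finset E) (hI : I ⊆ Δ)
    (W WI : Subgroup (Equiv.Perm E))
    (hWdef : W = Subgroup.closure
      {σ : Equiv.Perm E | ∃ α ∈ Δ,
        ∀ x : E, σ x = x - (2 * (inner ℝ x α : ℝ) / (inner ℝ α α : ℝ)) • α})
    (hWI : WI = Subgroup.closure
      {σ : Equiv.Perm E | ∃ α ∈ I,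
        ∀ x : E, σ x = x - (2 * (inner ℝ x α : ℝ) / (inner ℝ α α : ℝ)) • α})
    (w : Equiv.Perm E) (hw : w ∈ W)
    (hinv : (fun x => w x) ''
        {β : E | β ∈ Φp ∧ β ∉ Submodule.span ℝ (I : Set E)}
      = {β : E | β ∈ Φp ∧ β ∉ Submodule.span ℝ (I : Set E)}) :
    w ∈ WI := by
  have hsys : IsSimpleSystem Φ Φp Δ :=
    ⟨hΦ0, by simpa only [rootReflection_apply] using hrefl, hΦpΦ, hpos, hΔ, hind, hsimple⟩
  rw [hWdef, closure_reflections_eq_map] at hw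
  rw [hWI, closure_reflections_eq_map]
  obtain ⟨g, hg, rfl⟩ := Subgroup.mem_map.1 hw
  obtain ⟨l, hl, rfl⟩ := exists_rootWord_eq_of_mem_closure hg
  exact Subgroup.mem_map_of_mem _
    (hsys.rootWord_mem_closure_of_mapsTo hI l hl fun x hx => hinv ▸ mem_image_of_mem _ hx)

/-- If an element `w` of the Weyl group (generated by the simple reflections) maps the
set `Φ⁺ \ ⟨I⟩` onto itself, then `w` lies in the parabolic subgroup `W_I`. -/
theorem stmt_17 (E : Type*) [NormedAddCommGroup E] [InnerProductSpace ℝ E]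
    (Φ : Finset E) (hΦ0 : (0 : E) ∉ Φ)
    (hrefl : ∀ α ∈ Φ, ∀ β ∈ Φ, β - (2 * (inner ℝ β α : ℝ) / (inner ℝ α α : ℝ)) • α ∈ Φ)
    (hcrys : ∀ α ∈ Φ, ∀ β ∈ Φ, ∃ z : ℤ, (2 * (inner ℝ β α : ℝ) / (inner ℝ α α : ℝ)) = z)
    (Φp : Finset E) (hΦpΦ : Φp ⊆ Φ)
    (hpos : ∀ α ∈ Φ, (α ∈ Φp ∧ -α ∉ Φp) ∨ (α ∉ Φp ∧ -α ∈ Φp))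
    (Δ : Finset E) (hΔ : Δ ⊆ Φp)
    (hind : LinearIndependent ℝ (fun α : Δ => (α : E)))
    (hsimple : ∀ β ∈ Φp, ∃ c : E → ℕ, β = ∑ α ∈ Δ, (c α : ℝ) • α)
    (I : Finset E) (hI : I ⊆ Δ)
    (W WI : Subgroup (Equiv.Perm E))
    (hWdef : W = Subgroup.closure
      {σ : Equiv.Perm E | ∃ α ∈ Δ,
        ∀ x : E, σ x = x - (2 * (inner ℝ x α : ℝ) / (inner ℝ α α : ℝ)) • α})
    (hWI : WI = Subgroup.closure
      {σ : Equiv.Perm E | ∃ α ∈ I,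
        ∀ x : E, σ x = x - (2 * (inner ℝ x α : ℝ) / (inner ℝ α α : ℝ)) • α})
    (w : Equiv.Perm E) (hw : w ∈ W)
    (hinv : (fun x => w x) ''
        {β : E | β ∈ Φp ∧ β ∉ Submodule.span ℝ (I : Set E)}
      = {β : E | β ∈ Φp ∧ β ∉ Submodule.span ℝ (I : Set E)}) :
    w ∈ WI :=
  stmt_17_general E Φ hΦ0 hrefl Φp hΦpΦ hpos Δ hΔ hind hsimple I hI W WI hWdef hWI w hw hinv
end

section
/- Let n ≥ 2 and let h_0, h_1, ..., h_n be integers with h_0 = 1, h_j = h_{n-j} for all j, h_j ≤ h_{j+1} for all j ≤ n/2 - 1, and h_j ≥ 1 for all j. Suppose 0 ≤ C(n+2-1, n, h), where C(k_0, n, h) is defined for even n = 2m as Σ_{k=1}^{m}[12k^2 - n(k_0+1)]·h_{m-k} - m(k_0+1)·h_m and for odd n = 2m+1 as Σ_{k=1}^{m}[12k(k+1)+3-n(k_0+1)]·h_{m-k} - [n(k_0+1)-3]·h_m, with k_0 = n+1. Then h_j = 1 for all j = 0, ..., n. -/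
/-!
Put `m = n / 2` and `g k = h (m - k)`, which is antitone on `[0, m]` by unimodality. For
`k₀ = n + 1` the coefficient of `h m` in `C` is exactly minus the sum of the coefficients `c k`,
so the constraint says `(∑ c k) * g 0 ≤ ∑ c k * g k`. Abel summation turns the difference into
`∑ (g i - g (i + 1)) * T (i + 1)` with tail sums `T k = ∑_{j ≥ k} c j`, which have closed forms
and are positive. Hence `g` is constant, equal to `g m = h 0 = 1`, and symmetry gives the rest.
-/

open Finset

theorem sum_Icc_eq_sub_of_eq_sub_succ {M : Type*} [AddCommGroup M] {c T : ℕ → M}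
    (hc : ∀ j, c j = T j - T (j + 1)) {k m : ℕ} (hk : k ≤ m + 1) : ∑ j ∈ Icc k m, c j = T k - T (m + 1) := by
  rw [← Ico_add_one_right_eq_Icc, ← neg_sub, ← sum_Ico_sub T hk, ← sum_neg_distrib]
  exact sum_congr rfl fun j _ => by rw [hc, neg_sub]

theorem sum_Icc_mul_sub_eq_sum_range_mul_tail {R : Type*} [CommRing R] (c g : ℕ → R) (m : ℕ) :
    ∑ k ∈ Icc 1 m, c k * (g 0 - g k)
      = ∑ i ∈ range m, (g i - g (i + 1)) * ∑ k ∈ Icc (i + 1) m, c k := by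
  calc ∑ k ∈ Icc 1 m, c k * (g 0 - g k)
      = ∑ k ∈ Icc 1 m, ∑ i ∈ range k, c k * (g i - g (i + 1)) := by
        simp only [← mul_sum, sum_range_sub']
    _ = ∑ i ∈ range m, ∑ k ∈ Icc (i + 1) m, c k * (g i - g (i + 1)) :=
        sum_comm' fun k i => by simp only [mem_Icc, mem_range]; omega
    _ = ∑ i ∈ range m, (g i - g (i + 1)) * ∑ k ∈ Icc (i + 1) m, c k := by
        simp only [mul_comm (g _ - g _), sum_mul]

theorem eq_of_antitone_of_tail_sums_pos {R : Type*} [CommRing R] [LinearOrder R]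
    [IsStrictOrderedRing R] {m : ℕ} {c g : ℕ → R}
    (hc : ∀ k, 1 ≤ k → k ≤ m → 0 < ∑ j ∈ Icc k m, c j)
    (hg : ∀ k < m, g (k + 1) ≤ g k)
    (hcg : (∑ k ∈ Icc 1 m, c k) * g 0 ≤ ∑ k ∈ Icc 1 m, c k * g k) :
    ∀ k ≤ m, g k = g 0 := by
  have hterm : ∀ i ∈ range m, 0 ≤ (g i - g (i + 1)) * ∑ k ∈ Icc (i + 1) m, c k := fun i hi =>
    mul_nonneg (sub_nonneg.2 (hg i (mem_range.1 hi))) (hc _ (by omega) (mem_range.1 hi)).le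
  have hsum : ∑ i ∈ range m, (g i - g (i + 1)) * ∑ k ∈ Icc (i + 1) m, c k = 0 := by
    refine le_antisymm ?_ (sum_nonneg hterm)
    rw [← sum_Icc_mul_sub_eq_sum_range_mul_tail]
    simpa only [mul_sub, sum_sub_distrib, ← sum_mul, sub_nonpos] using hcg
  have hstep : ∀ i < m, g (i + 1) = g i := fun i hi => by
    have := (sum_eq_zero_iff_of_nonneg hterm).1 hsum i (mem_range.2 hi)
    rcases mul_eq_zero.1 this with hdiff | htail
    · exact (sub_eq_zero.1 hdiff).symm
    · exact absurd htail (hc _ (by omega) hi).ne'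
  intro k hk
  induction k with
  | zero => rfl
  | succ k ih => rw [hstep k (by omega), ih (by omega)]

theorem eq_of_even_constraint_nonneg {n m : ℕ} (hnm : n = 2 * m) {g : ℕ → ℤ}
    (hg : ∀ k < m, g (k + 1) ≤ g k)
    (hC : 0 ≤ (∑ k ∈ Icc 1 m, (12 * (k : ℤ) ^ 2 - (n : ℤ) * ((n : ℤ) + 2)) * g k)
      - (m : ℤ) * ((n : ℤ) + 2) * g 0) :
    ∀ k ≤ m, g k = g 0 := by
  have htail : ∀ k ≤ m + 1, ∑ j ∈ Icc k m, (12 * (j : ℤ) ^ 2 - (n : ℤ) * ((n : ℤ) + 2))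
      = 2 * (2 * (k : ℤ) - 1) * (m * (m + 1) - k * (k - 1)) := fun k hk => by
    rw [sum_Icc_eq_sub_of_eq_sub_succ
      (T := fun k : ℕ => 2 * (2 * (k : ℤ) - 1) * (m * (m + 1) - k * (k - 1))) _ hk]
    · push_cast; ring
    · intro j; subst hnm; push_cast; ring
  refine eq_of_antitone_of_tail_sums_pos
    (c := fun j : ℕ => 12 * (j : ℤ) ^ 2 - (n : ℤ) * ((n : ℤ) + 2)) (fun k hk1 hkm => ?_) hg ?_
  · have hk1 : (1 : ℤ) ≤ k := by exact_mod_cast hk1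
    have hkm : (k : ℤ) ≤ m := by exact_mod_cast hkm
    rw [htail k (by omega)]
    exact mul_pos (by linarith)
      (by nlinarith [mul_nonneg (sub_nonneg.2 hkm) (by linarith : (0 : ℤ) ≤ m + k + 1)])
  · rw [htail 1 (by omega)]
    subst hnm
    push_cast at hC ⊢
    linarith

theorem eq_of_odd_constraint_nonneg {n m : ℕ} (hnm : n = 2 * m + 1) {g : ℕ → ℤ}
    (hg : ∀ k < m, g (k + 1) ≤ g k)
    (hC : 0 ≤ (∑ k ∈ Icc 1 m,
        (12 * (k : ℤ) * ((k : ℤ) + 1) + 3 - (n : ℤ) * ((n : ℤ) + 2)) * g k)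
      - ((n : ℤ) * ((n : ℤ) + 2) - 3) * g 0) :
    ∀ k ≤ m, g k = g 0 := by
  have htail : ∀ k ≤ m + 1,
      ∑ j ∈ Icc k m, (12 * (j : ℤ) * ((j : ℤ) + 1) + 3 - (n : ℤ) * ((n : ℤ) + 2))
      = 4 * k * (m * (m + 2) - k ^ 2 + 1) := fun k hk => by
    rw [sum_Icc_eq_sub_of_eq_sub_succ
      (T := fun k : ℕ => 4 * (k : ℤ) * (m * (m + 2) - k ^ 2 + 1)) _ hk]
    · push_cast; ring
    · intro j; subst hnm; push_cast; ring
  refine eq_of_antitone_of_tail_sums_pos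
    (c := fun j : ℕ => 12 * (j : ℤ) * ((j : ℤ) + 1) + 3 - (n : ℤ) * ((n : ℤ) + 2))
    (fun k hk1 hkm => ?_) hg ?_
  · have hk1 : (1 : ℤ) ≤ k := by exact_mod_cast hk1
    have hkm : (k : ℤ) ≤ m := by exact_mod_cast hkm
    rw [htail k (by omega)]
    exact mul_pos (by linarith)
      (by nlinarith [mul_nonneg (sub_nonneg.2 hkm) (by linarith : (0 : ℤ) ≤ m + k)])
  · rw [htail 1 (by omega)]
    subst hnm
    push_cast at hC ⊢
    linarith

theorem stmt_18_general (n : ℕ) (h : ℕ → ℤ) (h0 : h 0 = 1)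
    (hsym : ∀ j ≤ n, h j = h (n - j))
    (huni : ∀ j : ℕ, j + 1 ≤ n / 2 → h j ≤ h (j + 1))
    (hC : 0 ≤ (if 2 ∣ n then
        (∑ k ∈ Finset.Icc 1 (n / 2),
            (12 * (k : ℤ) ^ 2 - (n : ℤ) * ((n : ℤ) + 2)) * h (n / 2 - k))
          - (n / 2 : ℕ) * ((n : ℤ) + 2) * h (n / 2)
      else
        (∑ k ∈ Finset.Icc 1 (n / 2),
            (12 * (k : ℤ) * ((k : ℤ) + 1) + 3 - (n : ℤ) * ((n : ℤ) + 2)) * h (n / 2 - k))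
          - ((n : ℤ) * ((n : ℤ) + 2) - 3) * h (n / 2))) :
    ∀ j ≤ n, h j = 1 := by
  set m := n / 2
  have hg : ∀ k < m, h (m - (k + 1)) ≤ h (m - k) := fun k hk => by
    simpa only [show m - (k + 1) + 1 = m - k by omega] using huni (m - (k + 1)) (by omega)
  have hconst : ∀ k ≤ m, h (m - k) = h m := by
    split_ifs at hC with hn
    · exact eq_of_even_constraint_nonneg (by omega) (g := fun k => h (m - k)) hg hC
    · exact eq_of_odd_constraint_nonneg (by omega) (g := fun k => h (m - k)) hg hC
  have hm : h m = 1 := by simpa [h0] using (hconst m le_rfl).symm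
  have hlow : ∀ j ≤ m, h j = 1 := fun j hj => by
    simpa only [Nat.sub_sub_self hj, hm] using hconst (m - j) (by omega)
  intro j hj
  rcases le_or_gt j m with hjm | hjm
  · exact hlow j hjm
  · rw [hsym j hj]
    exact hlow _ (by omega)

/-- If a symmetric, unimodal, positive integer `h`-vector with `h 0 = 1` satisfies the
nonnegativity constraint `0 ≤ C(n+1, n, h)` (index `k₀ = n + 1`), then `h` is the
all-ones vector. -/
theorem stmt_18 (n : ℕ) (hn : 2 ≤ n) (h : ℕ → ℤ) (h0 : h 0 = 1)
    (hsym : ∀ j ≤ n, h j = h (n - j))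
    (huni : ∀ j : ℕ, j + 1 ≤ n / 2 → h j ≤ h (j + 1))
    (hpos : ∀ j ≤ n, 1 ≤ h j)
    (hC : 0 ≤ (if 2 ∣ n then
        (∑ k ∈ Finset.Icc 1 (n / 2),
            (12 * (k : ℤ) ^ 2 - (n : ℤ) * ((n : ℤ) + 2)) * h (n / 2 - k))
          - (n / 2 : ℕ) * ((n : ℤ) + 2) * h (n / 2)
      else
        (∑ k ∈ Finset.Icc 1 (n / 2),
            (12 * (k : ℤ) * ((k : ℤ) + 1) + 3 - (n : ℤ) * ((n : ℤ) + 2)) * h (n / 2 - k))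
          - ((n : ℤ) * ((n : ℤ) + 2) - 3) * h (n / 2))) :
    ∀ j ≤ n, h j = 1 :=
  stmt_18_general n h h0 hsym huni hC
end
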